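/- arXiv:2103.00886 — 10 statements merged into one kernel-verified Lean document; each statement's English description precedes it below -/
import Mathlib

section
/- Let g > 0, h₀ > 0, u₀ > 0, a₀ ∈ ℝ. Define φ(h) = a₀ + h₀ + u₀²/(2g) − h − (h₀u₀)²/(2gh²) for h > 0, and a_max(U₀) = a₀ + h₀ + u₀²/(2g) − (3/(2 g^{1/3})) (h₀u₀)^{2/3}. Then for any a ∈ ℝ: (1) if a > a_max(U₀), the equation φ(h) = a has no solution h > 0; (2) if a < a_max(U₀), it has exactly two solutions h > 0; (3) if a = a_max(U₀), it has exactly one solution h > 0 (the two roots coincide). Equivalently, the stationary-wave system hu = h₀u₀, u²/2 + g(h + a) = u₀²/2 + g(h₀ + a₀) has two, one, or no solutions (u, h) with h > 0 according as a < a_max, a = a_max, or a > a_max. -/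
/-- The function `φ` whose level sets give the heights reachable from
`U₀ = (u₀,h₀,a₀)` by a stationary wave with bottom level `a`. -/
noncomputable def phi (g h₀ u₀ a₀ : ℝ) (h : ℝ) : ℝ :=
  a₀ + h₀ + u₀ ^ 2 / (2 * g) - h - (h₀ * u₀) ^ 2 / (2 * g * h ^ 2)

/-- The maximal bottom level reachable by a stationary wave from `U₀`. -/
noncomputable def aMax (g h₀ u₀ a₀ : ℝ) : ℝ :=
  a₀ + h₀ + u₀ ^ 2 / (2 * g) - 3 / (2 * g ^ ((1 : ℝ) / 3)) * (h₀ * u₀) ^ ((2 : ℝ) / 3)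

/-!
Write `q = h₀u₀` and `c = (q²/g)^{1/3}` for the critical depth. Then
`φ(h) = H - E(h)` with the total head `H = a₀ + h₀ + u₀²/(2g)` and the specific energy
`E(h) = h + c³/(2h²)`, while `a_max = H - 3c/2 = H - E(c)`. The function `E` is strictly
decreasing on `(0, c]`, strictly increasing on `[c, ∞)` and tends to `+∞` at both ends, so by
the intermediate value theorem each level above its minimum `E(c)` is attained exactly once on
either side of `c`, the level `E(c)` only at `c`, and lower levels not at all.
-/

open Set Filter Topology

section Valley

variable {f : ℝ → ℝ} {l c x y : ℝ}

theorem exists_mem_Ioo_apply_eq_of_tendsto_nhdsGT (hlc : l < c) (hf : ContinuousOn f (Ioc l c))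
    (hlim : Tendsto f (𝓝[>] l) atTop) (hy : f c < y) : ∃ x ∈ Ioo l c, f x = y := by
  obtain ⟨s, hys, hs⟩ := ((hlim.eventually_ge_atTop y).and (Ioo_mem_nhdsGT hlc)).exists
  obtain ⟨x, hx, hfx⟩ := intermediate_value_Icc' hs.2.le (hf.mono (Icc_subset_Ioc hs.1 le_rfl))
    ⟨hy.le, hys⟩
  refine ⟨x, ⟨hs.1.trans_le hx.1, hx.2.lt_of_ne ?_⟩, hfx⟩
  rintro rfl
  exact hy.ne hfx

theorem exists_mem_Ioi_apply_eq_of_tendsto_atTop (hf : ContinuousOn f (Ici c))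
    (hlim : Tendsto f atTop atTop) (hy : f c < y) : ∃ x ∈ Ioi c, f x = y := by
  obtain ⟨t, hyt, hct⟩ := ((hlim.eventually_ge_atTop y).and (eventually_gt_atTop c)).exists
  obtain ⟨x, hx, hfx⟩ := intermediate_value_Icc hct.le (hf.mono Icc_subset_Ici_self) ⟨hy.le, hyt⟩
  refine ⟨x, hx.1.lt_of_ne ?_, hfx⟩
  rintro rfl
  exact hy.ne hfx

variable (hanti : StrictAntiOn f (Ioc l c)) (hmono : StrictMonoOn f (Ici c))
include hanti hmono

theorem lt_apply_of_strictAntiOn_of_strictMonoOn (hx : l < x) (hxc : x ≠ c) : f c < f x := by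
  rcases hxc.lt_or_gt with hxc | hcx
  · exact hanti ⟨hx, hxc.le⟩ ⟨hx.trans hxc, le_rfl⟩ hxc
  · exact hmono (mem_Ici.2 le_rfl) (mem_Ici.2 hcx.le) hcx

theorem le_apply_of_strictAntiOn_of_strictMonoOn (hx : l < x) : f c ≤ f x := by
  rcases eq_or_ne x c with rfl | hxc
  · exact le_rfl
  · exact (lt_apply_of_strictAntiOn_of_strictMonoOn hanti hmono hx hxc).le

theorem exists_pair_apply_eq_of_strictAntiOn_of_strictMonoOn (hlc : l < c)
    (hf : ContinuousOn f (Ioi l)) (hlim_l : Tendsto f (𝓝[>] l) atTop)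
    (hlim_top : Tendsto f atTop atTop) (hy : f c < y) :
    ∃ x₁ x₂, l < x₁ ∧ l < x₂ ∧ x₁ ≠ x₂ ∧ f x₁ = y ∧ f x₂ = y ∧
      ∀ x, l < x → f x = y → x = x₁ ∨ x = x₂ := by
  obtain ⟨x₁, hx₁, hfx₁⟩ :=
    exists_mem_Ioo_apply_eq_of_tendsto_nhdsGT hlc (hf.mono Ioc_subset_Ioi_self) hlim_l hy
  obtain ⟨x₂, hx₂, hfx₂⟩ :=
    exists_mem_Ioi_apply_eq_of_tendsto_atTop (hf.mono (Ici_subset_Ioi.2 hlc)) hlim_top hy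
  refine ⟨x₁, x₂, hx₁.1, hlc.trans hx₂, (hx₁.2.trans hx₂).ne, hfx₁, hfx₂, fun x hx hfx => ?_⟩
  rcases le_or_gt x c with hxc | hcx
  · exact .inl (hanti.injOn ⟨hx, hxc⟩ (Ioo_subset_Ioc_self hx₁) (hfx.trans hfx₁.symm))
  · exact .inr (hmono.injOn (mem_Ici.2 hcx.le) (mem_Ici.2 hx₂.le) (hfx.trans hfx₂.symm))

end Valley

/-- The specific energy `h + q² / (2 g h²)` of a flow of depth `h` and discharge `q`, written in
terms of the critical depth `c = (q² / g) ^ (1/3)`. -/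
noncomputable def specificEnergy (c h : ℝ) : ℝ :=
  h + c ^ 3 / (2 * h ^ 2)

section SpecificEnergy

variable {c x y : ℝ}

theorem specificEnergy_self (hc : c ≠ 0) : specificEnergy c c = 3 * c / 2 := by
  unfold specificEnergy
  field_simp
  ring

theorem specificEnergy_sub (hx : x ≠ 0) (hy : y ≠ 0) :
    specificEnergy c y - specificEnergy c x
      = (y - x) * (2 * x ^ 2 * y ^ 2 - c ^ 3 * (x + y)) / (2 * x ^ 2 * y ^ 2) := by
  unfold specificEnergy
  field_simp
  ring

theorem strictAntiOn_specificEnergy (c : ℝ) : StrictAntiOn (specificEnergy c) (Ioc 0 c) := by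
  intro x hx y hy hxy
  have hx0 : 0 < x := hx.1
  have hy0 : 0 < y := hx0.trans hxy
  have hyc : y ^ 3 ≤ c ^ 3 := pow_le_pow_left₀ hy0.le hy.2 3
  -- `c³(x + y) ≥ y³(x + y) = x y³ + y⁴ > 2 x² y²`
  have hgap : 2 * x ^ 2 * y ^ 2 < c ^ 3 * (x + y) := by
    nlinarith [mul_le_mul_of_nonneg_right hyc (by positivity : (0:ℝ) ≤ x + y),
      mul_pos (mul_pos (sub_pos.2 hxy) hx0) (mul_pos hy0 hy0),
      mul_pos (mul_pos (sub_pos.2 hxy) (by linarith : (0:ℝ) < x + y)) (mul_pos hy0 hy0)]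
  rw [← sub_neg, specificEnergy_sub hx0.ne' hy0.ne']
  exact div_neg_of_neg_of_pos (mul_neg_of_pos_of_neg (sub_pos.2 hxy) (sub_neg.2 hgap))
    (by positivity)

theorem strictMonoOn_specificEnergy (hc : 0 < c) : StrictMonoOn (specificEnergy c) (Ici c) := by
  intro x hx y hy hxy
  have hx0 : 0 < x := hc.trans_le hx
  have hy0 : 0 < y := hx0.trans hxy
  have hcx : c ^ 3 ≤ x ^ 3 := pow_le_pow_left₀ hc.le hx 3
  -- `c³(x + y) ≤ x³(x + y) = x⁴ + x³ y < 2 x² y²`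
  have hgap : c ^ 3 * (x + y) < 2 * x ^ 2 * y ^ 2 := by
    nlinarith [mul_le_mul_of_nonneg_right hcx (by positivity : (0:ℝ) ≤ x + y),
      mul_pos (mul_pos (sub_pos.2 hxy) hx0) (mul_pos hx0 hy0),
      mul_pos (mul_pos (sub_pos.2 hxy) (by linarith : (0:ℝ) < x + y)) (mul_pos hx0 hx0)]
  rw [← sub_pos, specificEnergy_sub hx0.ne' hy0.ne']
  exact div_pos (mul_pos (sub_pos.2 hxy) (sub_pos.2 hgap)) (by positivity)

theorem continuousOn_specificEnergy (c : ℝ) : ContinuousOn (specificEnergy c) (Ioi 0) :=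
  continuousOn_id.add <| continuousOn_const.div (by fun_prop) fun h hh => by
    have : (0 : ℝ) < h := hh
    positivity

theorem tendsto_specificEnergy_nhdsGT_zero (hc : 0 < c) :
    Tendsto (specificEnergy c) (𝓝[>] 0) atTop := by
  have hinv : Tendsto (fun h : ℝ => c ^ 3 / 2 * h⁻¹ ^ 2) (𝓝[>] 0) atTop :=
    ((tendsto_pow_atTop two_ne_zero).comp tendsto_inv_nhdsGT_zero).const_mul_atTop (by positivity)
  have hid : Tendsto (fun h : ℝ => h) (𝓝[>] 0) (𝓝 0) :=
    tendsto_nhdsWithin_of_tendsto_nhds tendsto_id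
  convert hid.add_atTop hinv using 2 with h
  unfold specificEnergy
  ring

theorem tendsto_specificEnergy_atTop (hc : 0 ≤ c) : Tendsto (specificEnergy c) atTop atTop :=
  tendsto_atTop_mono (fun h => le_add_of_nonneg_right (by positivity)) tendsto_id

end SpecificEnergy

noncomputable def criticalDepth (g q : ℝ) : ℝ :=
  q ^ ((2 : ℝ) / 3) / g ^ ((1 : ℝ) / 3)

theorem criticalDepth_pos {g q : ℝ} (hg : 0 < g) (hq : 0 < q) : 0 < criticalDepth g q := by
  unfold criticalDepth
  positivity

theorem mul_criticalDepth_pow_three {g q : ℝ} (hg : 0 < g) (hq : 0 ≤ q) :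
    g * criticalDepth g q ^ 3 = q ^ 2 := by
  have hq3 : (q ^ ((2 : ℝ) / 3)) ^ 3 = q ^ 2 := by
    rw [← Real.rpow_natCast _ 3, ← Real.rpow_mul hq]
    norm_num
  have hg3 : (g ^ ((1 : ℝ) / 3)) ^ 3 = g := by
    rw [← Real.rpow_natCast _ 3, ← Real.rpow_mul hg.le]
    norm_num
  have hg0 : g ^ ((1 : ℝ) / 3) ≠ 0 := (Real.rpow_pos_of_pos hg _).ne'
  rw [criticalDepth, div_pow, hq3, hg3]
  field_simp

section StationaryWave

variable {g h₀ u₀ a₀ : ℝ}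

theorem phi_eq_sub_specificEnergy (hg : 0 < g) (hq : 0 ≤ h₀ * u₀) (h : ℝ) :
    phi g h₀ u₀ a₀ h
      = a₀ + h₀ + u₀ ^ 2 / (2 * g) - specificEnergy (criticalDepth g (h₀ * u₀)) h := by
  rw [phi, specificEnergy, ← mul_criticalDepth_pow_three hg hq, mul_comm (2 : ℝ) g, mul_assoc g,
    mul_div_mul_left _ _ hg.ne']
  ring

theorem aMax_eq :
    aMax g h₀ u₀ a₀ = a₀ + h₀ + u₀ ^ 2 / (2 * g) - 3 * criticalDepth g (h₀ * u₀) / 2 := by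
  rw [aMax, criticalDepth]
  ring

theorem stationaryWave_iff (hg : g ≠ 0) {a u h : ℝ} (hh : h ≠ 0) :
    (h * u = h₀ * u₀ ∧ u ^ 2 / 2 + g * (h + a) = u₀ ^ 2 / 2 + g * (h₀ + a₀)) ↔
      (u = h₀ * u₀ / h ∧ phi g h₀ u₀ a₀ h = a) := by
  rw [eq_div_iff hh, mul_comm u h]
  refine and_congr_right fun hmass => ?_
  obtain rfl : u = h₀ * u₀ / h := by rw [← hmass]; field_simp
  have hbernoulli : g * (phi g h₀ u₀ a₀ h - a)
      = u₀ ^ 2 / 2 + g * (h₀ + a₀) - ((h₀ * u₀ / h) ^ 2 / 2 + g * (h + a)) := by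
    rw [phi]
    field_simp
    ring
  rw [← sub_eq_zero (a := phi g h₀ u₀ a₀ h), ← mul_eq_zero_iff_left hg, hbernoulli, sub_eq_zero,
    eq_comm]

end StationaryWave

/-- Solvability of the stationary-wave equation `φ(h) = a`: no positive solution
when `a > a_max(U₀)`, exactly two when `a < a_max(U₀)`, exactly one when
`a = a_max(U₀)`; moreover, for `h > 0` the stationary-wave system
`hu = h₀u₀`, `u²/2 + g(h+a) = u₀²/2 + g(h₀+a₀)` is equivalent to
`u = h₀u₀/h` together with `φ(h) = a`. -/
theorem stmt_2 (g h₀ u₀ a₀ : ℝ) (hg : 0 < g) (hh₀ : 0 < h₀) (hu₀ : 0 < u₀) :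
    ∀ a : ℝ,
      ((aMax g h₀ u₀ a₀ < a → ¬ ∃ h : ℝ, 0 < h ∧ phi g h₀ u₀ a₀ h = a)
      ∧ (a < aMax g h₀ u₀ a₀ →
          ∃ h₁ h₂ : ℝ, 0 < h₁ ∧ 0 < h₂ ∧ h₁ ≠ h₂ ∧
            phi g h₀ u₀ a₀ h₁ = a ∧ phi g h₀ u₀ a₀ h₂ = a ∧
            ∀ h : ℝ, 0 < h → phi g h₀ u₀ a₀ h = a → h = h₁ ∨ h = h₂)
      ∧ (a = aMax g h₀ u₀ a₀ → ∃! h : ℝ, 0 < h ∧ phi g h₀ u₀ a₀ h = a)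
      ∧ ∀ u h : ℝ, 0 < h →
          ((h * u = h₀ * u₀ ∧
              u ^ 2 / 2 + g * (h + a) = u₀ ^ 2 / 2 + g * (h₀ + a₀)) ↔
            (u = h₀ * u₀ / h ∧ phi g h₀ u₀ a₀ h = a))) := by
  intro a
  have hq : 0 < h₀ * u₀ := mul_pos hh₀ hu₀
  set c := criticalDepth g (h₀ * u₀)
  have hc : 0 < c := criticalDepth_pos hg hq
  set y := a₀ + h₀ + u₀ ^ 2 / (2 * g) - a with hy
  have hphi (h : ℝ) : phi g h₀ u₀ a₀ h = a ↔ specificEnergy c h = y := by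
    rw [phi_eq_sub_specificEnergy hg hq.le, hy]
    constructor <;> intro <;> linarith
  have haMax : aMax g h₀ u₀ a₀ = a₀ + h₀ + u₀ ^ 2 / (2 * g) - specificEnergy c c := by
    rw [aMax_eq, specificEnergy_self hc.ne']
  have hanti := strictAntiOn_specificEnergy c
  have hmono := strictMonoOn_specificEnergy hc
  refine ⟨fun hlt ⟨h, hh, hfh⟩ => ?_, fun hlt => ?_, fun heq => ?_,
    fun u h hh => stationaryWave_iff hg.ne' hh.ne'⟩
  · have := le_apply_of_strictAntiOn_of_strictMonoOn hanti hmono hh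
    rw [hphi] at hfh
    linarith
  · simp only [hphi]
    exact exists_pair_apply_eq_of_strictAntiOn_of_strictMonoOn hanti hmono hc
      (continuousOn_specificEnergy c) (tendsto_specificEnergy_nhdsGT_zero hc)
      (tendsto_specificEnergy_atTop hc.le) (by linarith)
  · simp only [hphi]
    refine ⟨c, ⟨hc, by linarith⟩, fun h ⟨hh, hfh⟩ => by_contra fun hhc => ?_⟩
    have := lt_apply_of_strictAntiOn_of_strictMonoOn hanti hmono hh hhc
    linarith
end

section
/- Let g > 0, h₀ > 0, u₀ > √(g h₀) (so U₀ lies in the supercritical region D₃), and let a₁ < a₀. Suppose (u₁, h₁) with h₁ > 0 satisfies the stationary relations h₁u₁ = h₀u₀ and u₁²/2 + g(h₁ + a₁) = u₀²/2 + g(h₀ + a₀), and that the supercritical root is chosen, i.e. u₁ > √(g h₁). Then u₁ > u₀ and h₁ < h₀. -/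
/-- If `U₀ = (u₀,h₀,a₀)` is supercritical (`u₀ > √(gh₀)`), the bottom level
decreases (`a₁ < a₀`), and `(u₁,h₁)` is the supercritical root of the
stationary-wave relations, then `u₁ > u₀` and `h₁ < h₀`. -/
theorem stmt_5 (g h₀ u₀ a₀ a₁ u₁ h₁ : ℝ) (hg : 0 < g) (hh₀ : 0 < h₀)
    (hsup₀ : Real.sqrt (g * h₀) < u₀) (ha : a₁ < a₀) (hh₁ : 0 < h₁)
    (hmass : h₁ * u₁ = h₀ * u₀)
    (hener : u₁ ^ 2 / 2 + g * (h₁ + a₁) = u₀ ^ 2 / 2 + g * (h₀ + a₀))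
    (hsup₁ : Real.sqrt (g * h₁) < u₁) :
    u₀ < u₁ ∧ h₁ < h₀ := by
  have hu₀ : 0 < u₀ := lt_of_le_of_lt (Real.sqrt_nonneg _) hsup₀
  have hu₁ : 0 < u₁ := lt_of_le_of_lt (Real.sqrt_nonneg _) hsup₁
  have hq0 : g * h₀ < u₀ ^ 2 := by
    have := Real.sq_sqrt (le_of_lt (mul_pos hg hh₀))
    nlinarith [Real.sqrt_nonneg (g * h₀)]
  have hq1 : g * h₁ < u₁ ^ 2 := by
    have := Real.sq_sqrt (le_of_lt (mul_pos hg hh₁))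
    nlinarith [Real.sqrt_nonneg (g * h₁)]
  have hlt : h₁ < h₀ := by
    by_contra hle
    push_neg at hle
    -- q² > g h₀³ and q² > g h₁³ with q = h₀ u₀ = h₁ u₁
    have hq : (h₁ * u₁) ^ 2 = (h₀ * u₀) ^ 2 := by rw [hmass]
    have hA : g * h₀ ^ 3 * h₁ < (h₀ * u₀) ^ 2 * h₁ := by
      nlinarith [mul_lt_mul_of_pos_right hq0 (mul_pos (pow_pos hh₀ 2) hh₁)]
    have hB : g * h₁ ^ 3 * h₀ < (h₀ * u₀) ^ 2 * h₀ := by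
      nlinarith [mul_lt_mul_of_pos_right hq1 (mul_pos (pow_pos hh₁ 2) hh₀)]
    have hF1 : 2 * g * h₀ ^ 2 * h₁ ^ 2 ≤ (h₀ * u₀) ^ 2 * (h₀ + h₁) := by
      nlinarith [mul_nonneg (mul_nonneg hg.le hh₀.le)
        (mul_nonneg hh₁.le (sq_nonneg (h₀ - h₁)))]
    -- energy relation multiplied by 2 h₀² h₁²
    have hE : u₀ ^ 2 - u₁ ^ 2 < 2 * g * (h₁ - h₀) := by
      nlinarith [mul_pos hg (sub_pos.mpr ha)]
    have hE2 : (h₀ * u₀) ^ 2 * h₁ ^ 2 - (h₀ * u₀) ^ 2 * h₀ ^ 2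
        < 2 * g * (h₁ - h₀) * (h₀ ^ 2 * h₁ ^ 2) := by
      have := mul_lt_mul_of_pos_right hE
        (mul_pos (pow_pos hh₀ 2) (pow_pos hh₁ 2))
      nlinarith [this, hq]
    nlinarith [mul_nonneg (sub_nonneg.mpr hle)
      (sub_nonneg.mpr hF1)]
  have hult : u₀ < u₁ := by nlinarith
  exact ⟨hult, hlt⟩
end

section
/- Let g > 0, h₀ > 0, 0 < u₀ < √(g h₀) (so U₀ lies in the subcritical region D₂⁺), and let a₁ < a₀. Suppose (u₁, h₁) with h₁ > 0 satisfies the stationary relations h₁u₁ = h₀u₀ and u₁²/2 + g(h₁ + a₁) = u₀²/2 + g(h₀ + a₀), and that the subcritical root is chosen, i.e. 0 < u₁ < √(g h₁). Then u₁ < u₀ and h₁ > h₀. -/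
/-- If `U₀ = (u₀,h₀,a₀)` is subcritical with positive velocity
(`0 < u₀ < √(gh₀)`), the bottom level decreases (`a₁ < a₀`), and `(u₁,h₁)` is
the subcritical root of the stationary-wave relations, then `u₁ < u₀` and
`h₁ > h₀`. -/
theorem stmt_6 (g h₀ u₀ a₀ a₁ u₁ h₁ : ℝ) (hg : 0 < g) (hh₀ : 0 < h₀)
    (hu₀pos : 0 < u₀) (hsub₀ : u₀ < Real.sqrt (g * h₀)) (ha : a₁ < a₀)
    (hh₁ : 0 < h₁) (hmass : h₁ * u₁ = h₀ * u₀)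
    (hener : u₁ ^ 2 / 2 + g * (h₁ + a₁) = u₀ ^ 2 / 2 + g * (h₀ + a₀))
    (hu₁pos : 0 < u₁) (hsub₁ : u₁ < Real.sqrt (g * h₁)) :
    u₁ < u₀ ∧ h₀ < h₁ := by
  have hs0 : u₀ ^ 2 < g * h₀ := (Real.lt_sqrt hu₀pos.le).mp hsub₀
  have hs1 : u₁ ^ 2 < g * h₁ := (Real.lt_sqrt hu₁pos.le).mp hsub₁
  have hm2 : u₁ ^ 2 * h₁ ^ 2 = u₀ ^ 2 * h₀ ^ 2 := by
    calc u₁ ^ 2 * h₁ ^ 2 = (h₁ * u₁) ^ 2 := by ring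
      _ = (h₀ * u₀) ^ 2 := by rw [hmass]
      _ = u₀ ^ 2 * h₀ ^ 2 := by ring
  have key : (h₀ - h₁) * (u₀ ^ 2 * (h₀ + h₁) - 2 * g * h₁ ^ 2)
      = 2 * g * (a₀ - a₁) * h₁ ^ 2 := by
    linear_combination 2 * h₁ ^ 2 * hener - hm2
  have hh : h₀ < h₁ := by
    by_contra hle
    push_neg at hle
    have hB : u₀ ^ 2 * h₀ < g * h₁ ^ 2 := by
      have h1 : u₁ ^ 2 * h₁ ^ 2 < g * h₁ ^ 3 := by nlinarith [mul_pos hh₁ hh₁]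
      have h2 : g * h₁ ^ 3 ≤ g * h₁ ^ 2 * h₀ := by
        have := mul_le_mul_of_nonneg_left hle (by positivity : (0:ℝ) ≤ g * h₁ ^ 2)
        nlinarith
      have h3 : u₀ ^ 2 * h₀ ^ 2 < g * h₁ ^ 2 * h₀ := by
        rw [← hm2]; exact lt_of_lt_of_le h1 h2
      nlinarith
    nlinarith [key, hB, mul_pos (mul_pos hg (sub_pos.mpr ha)) (mul_pos hh₁ hh₁),
      mul_le_mul_of_nonneg_left hle (sq_nonneg u₀), sub_nonneg.mpr hle]
  refine ⟨?_, hh⟩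
  have h4 : h₁ * u₁ < h₁ * u₀ := by
    calc h₁ * u₁ = h₀ * u₀ := hmass
      _ < h₁ * u₀ := by nlinarith
  exact lt_of_mul_lt_mul_left h4 hh₁.le
end

section
/- Let g > 0, h₀ > 0, u₀ ∈ ℝ, and define the 1-shock speed σ₁(h) = u₀ − √((g/2)(h + h₀) h / h₀) for h ≥ h₀. Then: (1) if u₀ ≤ √(g h₀) then σ₁(h) < 0 for all h > h₀; (2) if u₀ > √(g h₀) then there is a unique h̃₀ > h₀ with σ₁(h̃₀) = 0, and σ₁(h) > 0 for h₀ < h < h̃₀ while σ₁(h) < 0 for h > h̃₀. -/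
private lemma sqrt_mono (g h₀ : ℝ) (hg : 0 < g) (hh₀ : 0 < h₀) {a b : ℝ}
    (ha : 0 < a) (hab : a < b) :
    Real.sqrt (g / 2 * (a + h₀) * a / h₀) < Real.sqrt (g / 2 * (b + h₀) * b / h₀) := by
  apply Real.sqrt_lt_sqrt (by positivity)
  apply (div_lt_div_iff_of_pos_right hh₀).mpr
  nlinarith [mul_pos hg (mul_pos (sub_pos.mpr hab) (by linarith : (0:ℝ) < a + b + h₀))]

private lemma at_h0 (g h₀ : ℝ) (hh₀ : 0 < h₀) :
    g / 2 * (h₀ + h₀) * h₀ / h₀ = g * h₀ := by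
  field_simp; ring

/-- Sign of the 1-shock speed `σ₁(h) = u₀ − √((g/2)(h+h₀)h/h₀)` for `h > h₀`:
if `u₀ ≤ √(gh₀)` it is negative for all `h > h₀`; if `u₀ > √(gh₀)` there is a
unique `h̃₀ > h₀` where it vanishes, and it is positive on `(h₀, h̃₀)` and
negative on `(h̃₀, ∞)`. -/
theorem stmt_9 (g h₀ u₀ : ℝ) (hg : 0 < g) (hh₀ : 0 < h₀) :
    ((u₀ ≤ Real.sqrt (g * h₀) →
        ∀ h : ℝ, h₀ < h → u₀ - Real.sqrt (g / 2 * (h + h₀) * h / h₀) < 0)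
    ∧ (Real.sqrt (g * h₀) < u₀ →
        ∃! ht : ℝ, h₀ < ht ∧ u₀ - Real.sqrt (g / 2 * (ht + h₀) * ht / h₀) = 0)
    ∧ (Real.sqrt (g * h₀) < u₀ →
        ∀ ht : ℝ, h₀ < ht → u₀ - Real.sqrt (g / 2 * (ht + h₀) * ht / h₀) = 0 →
          (∀ h : ℝ, h₀ < h → h < ht →
            0 < u₀ - Real.sqrt (g / 2 * (h + h₀) * h / h₀))
          ∧ (∀ h : ℝ, ht < h →
            u₀ - Real.sqrt (g / 2 * (h + h₀) * h / h₀) < 0))) := by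
  refine ⟨?_, ?_, ?_⟩
  · intro hu h hh
    have := sqrt_mono g h₀ hg hh₀ hh₀ hh
    rw [at_h0 g h₀ hh₀] at this
    linarith
  · intro hu
    have hu0 : 0 < u₀ := lt_of_le_of_lt (Real.sqrt_nonneg _) hu
    have hgu : g * h₀ < u₀ ^ 2 := by
      have := Real.sq_sqrt (by positivity : (0:ℝ) ≤ g * h₀)
      nlinarith [Real.sqrt_nonneg (g * h₀)]
    set s := Real.sqrt (h₀ ^ 2 + 8 * h₀ * u₀ ^ 2 / g) with hs
    have hs2 : s ^ 2 = h₀ ^ 2 + 8 * h₀ * u₀ ^ 2 / g := Real.sq_sqrt (by positivity)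
    have hs2' : g * s ^ 2 = g * h₀ ^ 2 + 8 * h₀ * u₀ ^ 2 := by
      rw [hs2]; field_simp
    have hs3 : 3 * h₀ < s := by
      have h1 : 8 * h₀ ^ 2 < 8 * h₀ * u₀ ^ 2 / g := by
        rw [lt_div_iff₀ hg]; nlinarith
      nlinarith [Real.sqrt_nonneg (h₀ ^ 2 + 8 * h₀ * u₀ ^ 2 / g)]
    have hx : h₀ < (s - h₀) / 2 := by linarith
    have hroot : u₀ - Real.sqrt (g / 2 * ((s - h₀) / 2 + h₀) * ((s - h₀) / 2) / h₀) = 0 := by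
      have harg : g / 2 * ((s - h₀) / 2 + h₀) * ((s - h₀) / 2) / h₀ = u₀ ^ 2 := by
        rw [div_eq_iff hh₀.ne']
        linear_combination (1 / 8 : ℝ) * hs2'
      rw [harg, Real.sqrt_sq hu0.le]; ring
    refine ⟨(s - h₀) / 2, ⟨hx, hroot⟩, ?_⟩
    rintro y ⟨hy, hy0⟩
    by_contra hne
    rcases lt_or_gt_of_ne hne with h | h
    · have := sqrt_mono g h₀ hg hh₀ (lt_trans hh₀ hy) h
      linarith
    · have := sqrt_mono g h₀ hg hh₀ (lt_trans hh₀ hx) h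
      linarith
  · intro hu ht hht hzero
    constructor
    · intro h hh1 hh2
      have := sqrt_mono g h₀ hg hh₀ (lt_trans hh₀ hh1) hh2
      linarith
    · intro h hh
      have := sqrt_mono g h₀ hg hh₀ (lt_trans hh₀ hht) hh
      linarith
end

section
/- Let g > 0 and let u_m, h_m > 0, a₀, a₁ ∈ ℝ be constants. Suppose on an open interval I ⊂ (0, ∞) there are differentiable functions h₀, u₀, u₁ of the parameter h₁ ∈ I, with h₀(h₁) > 0, satisfying for all h₁ ∈ I: u₀ = u_m + 2√g(√h₀ − √h_m) (the state (u₀,h₀) lies on the 2-rarefaction curve through (u_m,h_m)), h₀u₀ = h₁u₁, and u₀²/2 + g(h₀ + a₀) = u₁²/2 + g(h₁ + a₁) (stationary-wave relations). If √(h₀(h₁)) u₁(h₁) − √g h₁ ≠ 0 at a point h₁ ∈ I, then at that point du₁/dh₁ = (√g u₁ − g √h₀) / (√h₀ u₁ − √g h₁). -/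
/-- Derivative of the transmitted stationary curve `S₀(U₁,U₀)`: if on an open
interval `I ⊂ (0,∞)` the differentiable functions `h₀, u₀, u₁` of `h₁`
satisfy the 2-rarefaction relation `u₀ = u_m + 2√g(√h₀ − √h_m)` and the
stationary-wave relations `h₀u₀ = h₁u₁`,
`u₀²/2 + g(h₀+a₀) = u₁²/2 + g(h₁+a₁)`, then at every point where
`√(h₀)u₁ − √g·h₁ ≠ 0` one has
`du₁/dh₁ = (√g·u₁ − g√h₀)/(√h₀·u₁ − √g·h₁)`. -/
theorem stmt_13 (g um hm a₀ a₁ lo hi : ℝ) (hg : 0 < g) (hum : 0 < um)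
    (hhm : 0 < hm) (hlo : 0 ≤ lo)
    (h₀ u₀ u₁ : ℝ → ℝ)
    (hdiff : ∀ x ∈ Set.Ioo lo hi, DifferentiableAt ℝ h₀ x
      ∧ DifferentiableAt ℝ u₀ x ∧ DifferentiableAt ℝ u₁ x)
    (hpos : ∀ x ∈ Set.Ioo lo hi, 0 < h₀ x)
    (hrar : ∀ x ∈ Set.Ioo lo hi,
      u₀ x = um + 2 * Real.sqrt g * (Real.sqrt (h₀ x) - Real.sqrt hm))
    (hmass : ∀ x ∈ Set.Ioo lo hi, h₀ x * u₀ x = x * u₁ x)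
    (hener : ∀ x ∈ Set.Ioo lo hi,
      (u₀ x) ^ 2 / 2 + g * (h₀ x + a₀) = (u₁ x) ^ 2 / 2 + g * (x + a₁)) :
    ∀ x ∈ Set.Ioo lo hi,
      Real.sqrt (h₀ x) * u₁ x - Real.sqrt g * x ≠ 0 →
        deriv u₁ x = (Real.sqrt g * u₁ x - g * Real.sqrt (h₀ x)) /
          (Real.sqrt (h₀ x) * u₁ x - Real.sqrt g * x) := by
  intro x hx hne
  have hxmem : Set.Ioo lo hi ∈ nhds x := (isOpen_Ioo).mem_nhds hx
  obtain ⟨hdh, hdu0, hdu1⟩ := hdiff x hx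
  have hpx := hpos x hx
  set s := Real.sqrt (h₀ x) with hs
  set c := Real.sqrt g with hc
  have hspos : 0 < s := Real.sqrt_pos.mpr hpx
  have hcpos : 0 < c := Real.sqrt_pos.mpr hg
  have hs2 : s ^ 2 = h₀ x := Real.sq_sqrt hpx.le
  have hc2 : c ^ 2 = g := Real.sq_sqrt hg.le
  have Hh : HasDerivAt h₀ (deriv h₀ x) x := hdh.hasDerivAt
  have Hu0 : HasDerivAt u₀ (deriv u₀ x) x := hdu0.hasDerivAt
  have Hu1 : HasDerivAt u₁ (deriv u₁ x) x := hdu1.hasDerivAt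
  -- derivative of u₀ from the rarefaction relation
  have Hsqrt : HasDerivAt (fun y => Real.sqrt (h₀ y)) (1 / (2 * s) * deriv h₀ x) x :=
    (Real.hasDerivAt_sqrt hpx.ne').comp x Hh
  have Hrhs : HasDerivAt (fun y => um + 2 * c * (Real.sqrt (h₀ y) - Real.sqrt hm))
      (2 * c * (1 / (2 * s) * deriv h₀ x)) x := by
    simpa using ((Hsqrt.sub_const (Real.sqrt hm)).const_mul (2 * c)).const_add um
  have hu0' : deriv u₀ x = 2 * c * (1 / (2 * s) * deriv h₀ x) := by
    have hev : u₀ =ᶠ[nhds x] fun y => um + 2 * c * (Real.sqrt (h₀ y) - Real.sqrt hm) :=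
      Filter.eventuallyEq_of_mem hxmem (fun y hy => hrar y hy)
    rw [hev.deriv_eq, Hrhs.deriv]
  have E1 : s * deriv u₀ x = c * deriv h₀ x := by
    rw [hu0']; field_simp
  -- derivative of the mass relation
  have E2 : deriv h₀ x * u₀ x + h₀ x * deriv u₀ x = u₁ x + x * deriv u₁ x := by
    have hev : (fun y => h₀ y * u₀ y) =ᶠ[nhds x] fun y => y * u₁ y :=
      Filter.eventuallyEq_of_mem hxmem (fun y hy => hmass y hy)
    have h1 := hev.deriv_eq
    have Hmul : HasDerivAt (fun y => y * u₁ y) (1 * u₁ x + x * deriv u₁ x) x := by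
      simpa using (hasDerivAt_id x).fun_mul Hu1
    rw [(Hh.fun_mul Hu0).deriv, Hmul.deriv] at h1
    linarith [h1]
  -- derivative of the energy relation
  have E3 : u₀ x * deriv u₀ x + g * deriv h₀ x = u₁ x * deriv u₁ x + g := by
    have HL : HasDerivAt (fun y => (u₀ y) ^ 2 / 2 + g * (h₀ y + a₀))
        ((2 * u₀ x ^ 1 * deriv u₀ x) / 2 + g * deriv h₀ x) x :=
      ((Hu0.pow 2).div_const 2).add ((Hh.add_const a₀).const_mul g)
    have HR : HasDerivAt (fun y => (u₁ y) ^ 2 / 2 + g * (y + a₁))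
        ((2 * u₁ x ^ 1 * deriv u₁ x) / 2 + g * 1) x :=
      ((Hu1.pow 2).div_const 2).add (((hasDerivAt_id x).add_const a₁).const_mul g)
    have hev : (fun y => (u₀ y) ^ 2 / 2 + g * (h₀ y + a₀))
        =ᶠ[nhds x] fun y => (u₁ y) ^ 2 / 2 + g * (y + a₁) :=
      Filter.eventuallyEq_of_mem hxmem (fun y hy => hener y hy)
    have h1 := hev.deriv_eq
    rw [HL.deriv, HR.deriv] at h1
    ring_nf at h1 ⊢
    linarith [h1]
  rw [eq_div_iff hne]
  linear_combination c * E2 - s * E3 + (u₀ x - c * s) * E1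
    - s * deriv h₀ x * hc2 + c * deriv u₀ x * hs2
end

section
/- Under the setting of the previous derivative formula — g > 0; constants u_m, h_m, u₊, h₊ > 0 and a₀, a₁ ∈ ℝ; differentiable functions h₀(h₁) > 0, u₀(h₁), u₁(h₁) on an open interval I ⊂ (0, ∞) satisfying u₀ = u_m + 2√g(√h₀ − √h_m), h₀u₀ = h₁u₁, and u₀²/2 + g(h₀ + a₀) = u₁²/2 + g(h₁ + a₁) — define f(h₁) = u₁(h₁) − (u₊ + 2√g(√h₁ − √h₊)). Then at every h₁ ∈ I where √(h₀)u₁ − √g h₁ ≠ 0, f'(h₁) = √(g/h₁) · (u₁ + √(g h₁))(√h₁ − √h₀) / (u₁ √h₀ − √g h₁). -/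
/-!
Differentiating the rarefaction, mass and energy relations at `h₁` gives three linear equations in
`h₀'`, `u₀'`, `u₁'`. Eliminating `h₀'` and `u₀'` leaves
`u₁' · (u₁√h₀ − √g·h₁) = √g·(u₁ − √(g h₀))`, and since `f' = u₁' − √(g/h₁)` the formula follows
by clearing denominators.
-/

open Filter Topology

theorem HasDerivAt.eq_of_eventuallyEq {𝕜 F : Type*} [NontriviallyNormedField 𝕜]
    [NormedAddCommGroup F] [NormedSpace 𝕜 F] {f g : 𝕜 → F} {a b : F} {x : 𝕜}
    (hf : HasDerivAt f a x) (hg : HasDerivAt g b x) (h : f =ᶠ[𝓝 x] g) : a = b :=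
  hf.unique (hg.congr_of_eventuallyEq h)

namespace ShallowWater

variable {g x : ℝ} {h₀ u₀ u₁ : ℝ → ℝ} {h₀' u₀' u₁' : ℝ}

theorem rarefaction_hasDerivAt (c hp : ℝ) (hx : 0 < x) :
    HasDerivAt (fun y => c + 2 * √g * (√y - √hp)) (√g / √x) x := by
  have h := (((Real.hasDerivAt_sqrt hx.ne').sub_const √hp).const_mul (2 * √g)).const_add c
  refine h.congr_deriv ?_
  field_simp

theorem rarefaction_deriv_relation (um hm : ℝ) (hh₀ : 0 < h₀ x)
    (Hh₀ : HasDerivAt h₀ h₀' x) (Hu₀ : HasDerivAt u₀ u₀' x)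
    (hrar : u₀ =ᶠ[𝓝 x] fun y => um + 2 * √g * (√(h₀ y) - √hm)) :
    u₀' * √(h₀ x) = √g * h₀' := by
  have h := Hu₀.eq_of_eventuallyEq
    (((Hh₀.sqrt hh₀.ne').sub_const √hm).const_mul (2 * √g) |>.const_add um) hrar
  have hs₀ : 0 < √(h₀ x) := Real.sqrt_pos.mpr hh₀
  field_simp at h
  linarith

theorem mass_deriv_relation (Hh₀ : HasDerivAt h₀ h₀' x) (Hu₀ : HasDerivAt u₀ u₀' x)
    (Hu₁ : HasDerivAt u₁ u₁' x) (hmass : (fun y => h₀ y * u₀ y) =ᶠ[𝓝 x] fun y => y * u₁ y) :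
    h₀' * u₀ x + h₀ x * u₀' = u₁ x + x * u₁' := by
  simpa using (Hh₀.mul Hu₀).eq_of_eventuallyEq ((hasDerivAt_id x).mul Hu₁) hmass

theorem energy_deriv_relation (a₀ a₁ : ℝ) (Hh₀ : HasDerivAt h₀ h₀' x)
    (Hu₀ : HasDerivAt u₀ u₀' x) (Hu₁ : HasDerivAt u₁ u₁' x)
    (hener : (fun y => u₀ y ^ 2 / 2 + g * (h₀ y + a₀)) =ᶠ[𝓝 x]
      fun y => u₁ y ^ 2 / 2 + g * (y + a₁)) :
    u₀ x * u₀' + g * h₀' = u₁ x * u₁' + g := by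
  have h := (((Hu₀.pow 2).div_const 2).add ((Hh₀.add_const a₀).const_mul g)).eq_of_eventuallyEq
    (((Hu₁.pow 2).div_const 2).add (((hasDerivAt_id x).add_const a₁).const_mul g)) hener
  simp only [Nat.cast_ofNat] at h
  linarith

theorem stationary_deriv_relation {h u v h' u' v' : ℝ} (hg : 0 ≤ g) (hh : 0 ≤ h)
    (hrar : u' * √h = √g * h') (hmass : h' * u + h * u' = v + x * v')
    (hener : u * u' + g * h' = v * v' + g) :
    v' * (v * √h - √g * x) = √g * v - g * √h := by
  linear_combination (-√h) * hener + √g * hmass + (u - √g * √h) * hrar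
    - √h * h' * Real.sq_sqrt hg + √g * u' * Real.sq_sqrt hh

theorem gap_deriv_eq {h v v' : ℝ} (hg : 0 ≤ g) (hx : 0 < x) (hD : v * √h - √g * x ≠ 0)
    (hv' : v' * (v * √h - √g * x) = √g * v - g * √h) :
    v' - √g / √x = √(g / x) * ((v + √(g * x)) * (√x - √h)) / (v * √h - √g * x) := by
  have hsx : 0 < √x := Real.sqrt_pos.mpr hx
  rw [Real.sqrt_div hg, Real.sqrt_mul hg]
  field_simp
  linear_combination √x * hv' + √x * √h * Real.sq_sqrt hg - √g ^ 2 * Real.sq_sqrt hx.le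

end ShallowWater

open ShallowWater in
theorem stmt_14_general (g um hm up hp a₀ a₁ lo hi : ℝ) (hg : 0 < g) (hlo : 0 ≤ lo)
    (h₀ u₀ u₁ : ℝ → ℝ)
    (hdiff : ∀ x ∈ Set.Ioo lo hi, DifferentiableAt ℝ h₀ x
      ∧ DifferentiableAt ℝ u₀ x ∧ DifferentiableAt ℝ u₁ x)
    (hpos : ∀ x ∈ Set.Ioo lo hi, 0 < h₀ x)
    (hrar : ∀ x ∈ Set.Ioo lo hi,
      u₀ x = um + 2 * Real.sqrt g * (Real.sqrt (h₀ x) - Real.sqrt hm))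
    (hmass : ∀ x ∈ Set.Ioo lo hi, h₀ x * u₀ x = x * u₁ x)
    (hener : ∀ x ∈ Set.Ioo lo hi,
      (u₀ x) ^ 2 / 2 + g * (h₀ x + a₀) = (u₁ x) ^ 2 / 2 + g * (x + a₁)) :
    ∀ x ∈ Set.Ioo lo hi,
      Real.sqrt (h₀ x) * u₁ x - Real.sqrt g * x ≠ 0 →
        deriv (fun y : ℝ =>
            u₁ y - (up + 2 * Real.sqrt g * (Real.sqrt y - Real.sqrt hp))) x
          = Real.sqrt (g / x) *
              ((u₁ x + Real.sqrt (g * x)) * (Real.sqrt x - Real.sqrt (h₀ x))) /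
              (u₁ x * Real.sqrt (h₀ x) - Real.sqrt g * x) := by
  intro x hx hne
  obtain ⟨Hh₀, Hu₀, Hu₁⟩ := hdiff x hx
  have hnear : ∀ᶠ y in 𝓝 x, y ∈ Set.Ioo lo hi := isOpen_Ioo.mem_nhds hx
  have hx₀ : 0 < x := hlo.trans_lt hx.1
  have hu₁' := stationary_deriv_relation hg.le (hpos x hx).le
    (rarefaction_deriv_relation um hm (hpos x hx) Hh₀.hasDerivAt Hu₀.hasDerivAt
      (hnear.mono hrar))
    (mass_deriv_relation Hh₀.hasDerivAt Hu₀.hasDerivAt Hu₁.hasDerivAt (hnear.mono hmass))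
    (energy_deriv_relation a₀ a₁ Hh₀.hasDerivAt Hu₀.hasDerivAt Hu₁.hasDerivAt
      (hnear.mono hener))
  rw [(Hu₁.hasDerivAt.fun_sub (rarefaction_hasDerivAt up hp hx₀)).deriv]
  exact gap_deriv_eq hg.le hx₀ (by rwa [mul_comm]) hu₁'

/-- Derivative of the gap `f(h₁) = u₁(h₁) − (u₊ + 2√g(√h₁ − √h₊))` between the
transmitted stationary curve `S₀(U₁,U₀)` and the 2-rarefaction curve through
`(u₊,h₊)`: under the relations `u₀ = u_m + 2√g(√h₀ − √h_m)`, `h₀u₀ = h₁u₁`,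
`u₀²/2 + g(h₀+a₀) = u₁²/2 + g(h₁+a₁)` on an open interval `I ⊂ (0,∞)`, at each
point with `√(h₀)u₁ − √g·h₁ ≠ 0`,
`f'(h₁) = √(g/h₁)·(u₁ + √(gh₁))(√h₁ − √h₀)/(u₁√h₀ − √g·h₁)`. -/
theorem stmt_14 (g um hm up hp a₀ a₁ lo hi : ℝ) (hg : 0 < g) (hum : 0 < um)
    (hhm : 0 < hm) (hup : 0 < up) (hhp : 0 < hp) (hlo : 0 ≤ lo)
    (h₀ u₀ u₁ : ℝ → ℝ)
    (hdiff : ∀ x ∈ Set.Ioo lo hi, DifferentiableAt ℝ h₀ x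
      ∧ DifferentiableAt ℝ u₀ x ∧ DifferentiableAt ℝ u₁ x)
    (hpos : ∀ x ∈ Set.Ioo lo hi, 0 < h₀ x)
    (hrar : ∀ x ∈ Set.Ioo lo hi,
      u₀ x = um + 2 * Real.sqrt g * (Real.sqrt (h₀ x) - Real.sqrt hm))
    (hmass : ∀ x ∈ Set.Ioo lo hi, h₀ x * u₀ x = x * u₁ x)
    (hener : ∀ x ∈ Set.Ioo lo hi,
      (u₀ x) ^ 2 / 2 + g * (h₀ x + a₀) = (u₁ x) ^ 2 / 2 + g * (x + a₁)) :
    ∀ x ∈ Set.Ioo lo hi,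
      Real.sqrt (h₀ x) * u₁ x - Real.sqrt g * x ≠ 0 →
        deriv (fun y : ℝ =>
            u₁ y - (up + 2 * Real.sqrt g * (Real.sqrt y - Real.sqrt hp))) x
          = Real.sqrt (g / x) *
              ((u₁ x + Real.sqrt (g * x)) * (Real.sqrt x - Real.sqrt (h₀ x))) /
              (u₁ x * Real.sqrt (h₀ x) - Real.sqrt g * x) :=
  stmt_14_general g um hm up hp a₀ a₁ lo hi hg hlo h₀ u₀ u₁ hdiff hpos hrar hmass hener
end

section
/- Let g > 0, a₁ < a₀, and let u_m, h_m, u₊, h₊ > 0 satisfy the stationary-wave relations h_m u_m = h₊ u₊ and u_m²/2 + g(h_m + a₀) = u₊²/2 + g(h₊ + a₁). Assume both states are in region I: u_m > 2√(g h_m) and u₊ > 2√(g h₊), and assume h₊ < h_m. Define ū_m = u_m − 2√(g h_m), ū₊ = u₊ − 2√(g h₊), and ũ = √(ū_m² + 2g(a₀ − a₁)). Then ũ > ū₊ > 0; in particular ũ² − ū₊² = 2g(h_m − h₊) + 4√g(u₊√h₊ − u_m√h_m) > 0. -/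
set_option maxHeartbeats 1000000


/-- In region I (`u > 2√(gh)`), if the stationary wave connects `(u_m,h_m,a₀)`
to `(u₊,h₊,a₁)` with `a₁ < a₀` and `h₊ < h_m`, and
`ū_m = u_m − 2√(gh_m)`, `ū₊ = u₊ − 2√(gh₊)`, `ũ = √(ū_m² + 2g(a₀−a₁))`,
then `ũ > ū₊ > 0`; in particular
`ũ² − ū₊² = 2g(h_m − h₊) + 4√g(u₊√h₊ − u_m√h_m) > 0`. -/
theorem stmt_15 (g a₀ a₁ um hm up hp : ℝ) (hg : 0 < g) (ha : a₁ < a₀)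
    (hhm : 0 < hm) (hhp : 0 < hp)
    (hmass : hm * um = hp * up)
    (hener : um ^ 2 / 2 + g * (hm + a₀) = up ^ 2 / 2 + g * (hp + a₁))
    (hIm : 2 * Real.sqrt (g * hm) < um)
    (hIp : 2 * Real.sqrt (g * hp) < up)
    (hlt : hp < hm) :
    0 < up - 2 * Real.sqrt (g * hp)
    ∧ up - 2 * Real.sqrt (g * hp)
        < Real.sqrt ((um - 2 * Real.sqrt (g * hm)) ^ 2 + 2 * g * (a₀ - a₁))
    ∧ Real.sqrt ((um - 2 * Real.sqrt (g * hm)) ^ 2 + 2 * g * (a₀ - a₁)) ^ 2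
        - (up - 2 * Real.sqrt (g * hp)) ^ 2
      = 2 * g * (hm - hp)
        + 4 * Real.sqrt g * (up * Real.sqrt hp - um * Real.sqrt hm)
    ∧ 0 < 2 * g * (hm - hp)
        + 4 * Real.sqrt g * (up * Real.sqrt hp - um * Real.sqrt hm) := by
  have hsg : Real.sqrt g ^ 2 = g := Real.sq_sqrt hg.le
  have hshm : Real.sqrt hm ^ 2 = hm := Real.sq_sqrt hhm.le
  have hshp : Real.sqrt hp ^ 2 = hp := Real.sq_sqrt hhp.le
  have hsgp : 0 < Real.sqrt g := Real.sqrt_pos.mpr hg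
  have hshmp : 0 < Real.sqrt hm := Real.sqrt_pos.mpr hhm
  have hshpp : 0 < Real.sqrt hp := Real.sqrt_pos.mpr hhp
  have hm1 : Real.sqrt (g * hm) = Real.sqrt g * Real.sqrt hm := Real.sqrt_mul hg.le _
  have hp1 : Real.sqrt (g * hp) = Real.sqrt g * Real.sqrt hp := Real.sqrt_mul hg.le _
  have hum : 0 < um := lt_trans (by positivity) hIm
  have hup : 0 < up := lt_trans (by positivity) hIp
  have hss : Real.sqrt hp < Real.sqrt hm := Real.sqrt_lt_sqrt hhp.le hlt
  have hnn : 0 ≤ (um - 2 * Real.sqrt (g * hm)) ^ 2 + 2 * g * (a₀ - a₁) := by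
    have h1 : 0 < a₀ - a₁ := sub_pos.mpr ha
    positivity
  have hsq : Real.sqrt ((um - 2 * Real.sqrt (g * hm)) ^ 2 + 2 * g * (a₀ - a₁)) ^ 2
      = (um - 2 * Real.sqrt (g * hm)) ^ 2 + 2 * g * (a₀ - a₁) := Real.sq_sqrt hnn
  have hid : Real.sqrt ((um - 2 * Real.sqrt (g * hm)) ^ 2 + 2 * g * (a₀ - a₁)) ^ 2
        - (up - 2 * Real.sqrt (g * hp)) ^ 2
      = 2 * g * (hm - hp)
        + 4 * Real.sqrt g * (up * Real.sqrt hp - um * Real.sqrt hm) := by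
    rw [hsq, hm1, hp1]
    nlinarith [hsg, hshm, hshp, hener, sq_nonneg (Real.sqrt g * Real.sqrt hm),
      sq_nonneg (Real.sqrt g * Real.sqrt hp)]
  have hpos : 0 < 2 * g * (hm - hp)
        + 4 * Real.sqrt g * (up * Real.sqrt hp - um * Real.sqrt hm) := by
    have key : 0 < up * Real.sqrt hp - um * Real.sqrt hm := by
      have h2 : 0 < um * Real.sqrt hm * (Real.sqrt hm - Real.sqrt hp) :=
        mul_pos (mul_pos hum hshmp) (sub_pos.mpr hss)
      have h4 : (up * Real.sqrt hp - um * Real.sqrt hm) * Real.sqrt hp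
          = um * Real.sqrt hm * (Real.sqrt hm - Real.sqrt hp) := by
        linear_combination up * hshp - um * hshm - hmass
      nlinarith [h2, h4, hshpp]
    nlinarith [mul_pos hsgp key, mul_pos hg (sub_pos.mpr hlt)]
  have hup0 : 0 < up - 2 * Real.sqrt (g * hp) := by linarith
  refine ⟨hup0, ?_, hid, hpos⟩
  have h3 : (up - 2 * Real.sqrt (g * hp)) ^ 2
      < Real.sqrt ((um - 2 * Real.sqrt (g * hm)) ^ 2 + 2 * g * (a₀ - a₁)) ^ 2 := by
    linarith
  exact (Real.lt_sqrt hup0.le).mpr (by linarith [hsq])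
end

section
/- Let g > 0, a₁ < a₀, and let u_m, h_m, u₊, h₊ > 0 satisfy the stationary-wave relations h_m u_m = h₊ u₊ and u_m²/2 + g(h_m + a₀) = u₊²/2 + g(h₊ + a₁). Assume both states are in region III: 0 < u_m < √(g h_m) and 0 < u₊ < √(g h₊), and assume u₊ < u_m. Define h̄_m = (2√(g h_m) − u_m)²/(4g), h̄₊ = (2√(g h₊) − u₊)²/(4g), and h̃ = h̄_m + a₀ − a₁. Then h̃ < h̄₊; in fact h̃ − h̄₊ = (u₊² − u_m²)/(4g) + √(h₊ u₊)(√u₊ − √u_m)/√g < 0. -/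
/-!
Write `s = √g`. Expanding the square, each intercept is `(2√(gh) - u)²/(4g) = h - √h u / s + u²/(4g)`.
The energy relation turns `h_m - h₊ + a₀ - a₁` into `(u₊² - u_m²)/(2g)`, and the square root of the
mass relation, `√h_m √u_m = √h₊ √u₊`, turns `√h_m u_m - √h₊ u₊` into `√(h₊u₊)(√u_m - √u₊)`.
This gives the identity; when `0 ≤ u₊ < u_m` its first term is negative and its second nonpositive.
-/

open Real

lemma two_sqrt_mul_sub_sq_div {g h : ℝ} (hg : 0 < g) (hh : 0 ≤ h) (u : ℝ) :
    (2 * √(g * h) - u) ^ 2 / (4 * g) = h - √h * u / √g + u ^ 2 / (4 * g) := by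
  rw [sqrt_mul hg.le]
  field_simp
  linear_combination (4 * √g * √h ^ 2 - 4 * √h * u) * sq_sqrt hg.le + 4 * √g * g * sq_sqrt hh

lemma sqrt_mul_sub_sqrt_mul_of_mul_eq {h₁ u₁ h₂ u₂ : ℝ} (hh₁ : 0 ≤ h₁) (hu₁ : 0 ≤ u₁)
    (hh₂ : 0 ≤ h₂) (hu₂ : 0 ≤ u₂) (hmass : h₁ * u₁ = h₂ * u₂) :
    √h₁ * u₁ - √h₂ * u₂ = √(h₂ * u₂) * (√u₁ - √u₂) := by
  have hroot : √h₁ * √u₁ = √h₂ * √u₂ := by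
    rw [← sqrt_mul hh₁, ← sqrt_mul hh₂, hmass]
  rw [sqrt_mul hh₂]
  linear_combination √u₁ * hroot - √h₁ * sq_sqrt hu₁ + √h₂ * sq_sqrt hu₂

theorem stmt_16_general (g a₀ a₁ um hm up hp : ℝ) (hg : 0 < g)
    (hhm : 0 < hm) (hhp : 0 < hp)
    (hmass : hm * um = hp * up)
    (hener : um ^ 2 / 2 + g * (hm + a₀) = up ^ 2 / 2 + g * (hp + a₁))
    (humpos : 0 < um)
    (huppos : 0 < up)
    (hlt : up < um) :
    ((2 * Real.sqrt (g * hm) - um) ^ 2 / (4 * g) + a₀ - a₁)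
        - (2 * Real.sqrt (g * hp) - up) ^ 2 / (4 * g)
      = (up ^ 2 - um ^ 2) / (4 * g)
        + Real.sqrt (hp * up) * (Real.sqrt up - Real.sqrt um) / Real.sqrt g
    ∧ (2 * Real.sqrt (g * hm) - um) ^ 2 / (4 * g) + a₀ - a₁
        < (2 * Real.sqrt (g * hp) - up) ^ 2 / (4 * g) := by
  have hflux := sqrt_mul_sub_sqrt_mul_of_mul_eq hhm.le humpos.le hhp.le huppos.le hmass
  have hidentity : ((2 * √(g * hm) - um) ^ 2 / (4 * g) + a₀ - a₁)
        - (2 * √(g * hp) - up) ^ 2 / (4 * g)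
      = (up ^ 2 - um ^ 2) / (4 * g) + √(hp * up) * (√up - √um) / √g := by
    rw [two_sqrt_mul_sub_sq_div hg hhm.le, two_sqrt_mul_sub_sq_div hg hhp.le]
    field_simp
    linear_combination 4 * √g * hener - 4 * g * hflux
  have hkinetic : (up ^ 2 - um ^ 2) / (4 * g) < 0 :=
    div_neg_of_neg_of_pos (by nlinarith) (by positivity)
  have hflux_term : √(hp * up) * (√up - √um) / √g ≤ 0 :=
    div_nonpos_of_nonpos_of_nonneg
      (mul_nonpos_of_nonneg_of_nonpos (sqrt_nonneg _)
        (sub_nonpos.mpr (sqrt_le_sqrt hlt.le)))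
      (sqrt_nonneg g)
  exact ⟨hidentity, by linarith⟩

/-- In region III (`0 < u < √(gh)`), if the stationary wave connects
`(u_m,h_m,a₀)` to `(u₊,h₊,a₁)` with `a₁ < a₀` and `u₊ < u_m`, and
`h̄_m = (2√(gh_m) − u_m)²/(4g)`, `h̄₊ = (2√(gh₊) − u₊)²/(4g)`,
`h̃ = h̄_m + a₀ − a₁`, then
`h̃ − h̄₊ = (u₊² − u_m²)/(4g) + √(h₊u₊)(√u₊ − √u_m)/√g < 0`,
i.e. `h̃ < h̄₊`. -/
theorem stmt_16 (g a₀ a₁ um hm up hp : ℝ) (hg : 0 < g) (ha : a₁ < a₀)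
    (hhm : 0 < hm) (hhp : 0 < hp)
    (hmass : hm * um = hp * up)
    (hener : um ^ 2 / 2 + g * (hm + a₀) = up ^ 2 / 2 + g * (hp + a₁))
    (humpos : 0 < um) (hIIIm : um < Real.sqrt (g * hm))
    (huppos : 0 < up) (hIIIp : up < Real.sqrt (g * hp))
    (hlt : up < um) :
    ((2 * Real.sqrt (g * hm) - um) ^ 2 / (4 * g) + a₀ - a₁)
        - (2 * Real.sqrt (g * hp) - up) ^ 2 / (4 * g)
      = (up ^ 2 - um ^ 2) / (4 * g)
        + Real.sqrt (hp * up) * (Real.sqrt up - Real.sqrt um) / Real.sqrt g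
    ∧ (2 * Real.sqrt (g * hm) - um) ^ 2 / (4 * g) + a₀ - a₁
        < (2 * Real.sqrt (g * hp) - up) ^ 2 / (4 * g) :=
  stmt_16_general g a₀ a₁ um hm up hp hg hhm hhp hmass hener humpos huppos hlt
end

section
/- Let g > 0, h₅ > 0, u_A ∈ ℝ, h_A > 0 be constants and let x̂, t̂ ∈ ℝ. Suppose on an open interval J ⊂ (t̂, ∞) there are differentiable functions x(t), u(t), h(t) with h(t) > 0 satisfying: x'(t) = u − √((g/2)(h + h₅) h₅ / h) (the 1-shock speed against the state of depth h₅); x(t) − x̂ = (u − √(g h))(t − t̂) (the shock point lies on the 1-characteristic of the centered rarefaction fan centered at (x̂, t̂)); and u + 2√(g h) = u_A + 2√(g h_A) (constancy of the 1-Riemann invariant across the rarefaction). Then h satisfies the ODE h'(t) = −(2 / (3(t − t̂))) · (h − √((h + h₅) h₅ / 2)) on J. -/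
/-!
Write `c = √(g h)` for the sound speed ahead of the shock. Differentiating the invariant relation
gives `u' = -2c'`, and differentiating the fan relation then gives `x' = -3c'(t - t̂) + u - c`.
Equating this with the shock speed `u - c √((h + h₅)h₅/2) / h` yields
`3c'(t - t̂) = c (√((h + h₅)h₅/2) / h - 1)`, and `c' = g h' / (2c)`, `c² = g h` turn this into the
ODE for `h`.
-/

open Filter Topology

lemma sqrt_shock_speed_eq {g h h₅ : ℝ} (hg : 0 < g) (hh : 0 < h) :
    √(g / 2 * (h + h₅) * h₅ / h) = √(g * h) * √((h + h₅) * h₅ / 2) / h := by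
  have hsplit : g / 2 * (h + h₅) * h₅ / h = (g * h) * ((h + h₅) * h₅ / 2) / h ^ 2 := by
    field_simp
  rw [hsplit, Real.sqrt_div' _ (sq_nonneg h), Real.sqrt_sq hh.le,
    Real.sqrt_mul (mul_pos hg hh).le]

lemma HasDerivAt.eq_neg_two_mul_of_add_two_mul_eventuallyEq_const {u c : ℝ → ℝ} {u' c' t K : ℝ}
    (hu : HasDerivAt u u' t) (hc : HasDerivAt c c' t)
    (hconst : ∀ᶠ s in 𝓝 t, u s + 2 * c s = K) : u' = -(2 * c') := by
  have := (hu.add (hc.const_mul 2)).unique ((hasDerivAt_const t K).congr_of_eventuallyEq hconst)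
  linarith

lemma HasDerivAt.of_eventuallyEq_sub_mul_sub {x u c : ℝ → ℝ} {u' c' t x₀ t₀ : ℝ}
    (hu : HasDerivAt u u' t) (hc : HasDerivAt c c' t)
    (hfan : ∀ᶠ s in 𝓝 t, x s - x₀ = (u s - c s) * (s - t₀)) :
    HasDerivAt x ((u' - c') * (t - t₀) + (u t - c t)) t := by
  have hline := (hasDerivAt_const t x₀).add ((hu.sub hc).mul ((hasDerivAt_id t).sub_const t₀))
  refine (hline.congr_deriv (by simp)).congr_of_eventuallyEq ?_
  filter_upwards [hfan] with s hs
  simp only [Pi.add_apply, Pi.mul_apply, Pi.sub_apply, id]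
  linarith

lemma depth_ode_of_sound_speed_ode {g h h' S τ : ℝ} (hg : 0 < g) (hh : 0 < h) (hτ : τ ≠ 0)
    (hODE : 3 * (g * h' / (2 * √(g * h))) * τ = √(g * h) * (S / h - 1)) :
    h' = -(2 / (3 * τ)) * (h - S) := by
  have hc : 0 < √(g * h) := Real.sqrt_pos.mpr (mul_pos hg hh)
  have hc2 : √(g * h) ^ 2 = g * h := Real.sq_sqrt (mul_pos hg hh).le
  field_simp at hODE ⊢
  exact mul_left_cancel₀ (mul_pos hg hh).ne' (by linear_combination hODE + 2 * (S - h) * hc2)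

theorem stmt_17_general (g h₅ uA hA xhat that t₁ t₂ : ℝ) (hg : 0 < g)
    (ht₁ : that ≤ t₁)
    (x u h : ℝ → ℝ)
    (hdiff : ∀ t ∈ Set.Ioo t₁ t₂, DifferentiableAt ℝ x t
      ∧ DifferentiableAt ℝ u t ∧ DifferentiableAt ℝ h t)
    (hpos : ∀ t ∈ Set.Ioo t₁ t₂, 0 < h t)
    (hspeed : ∀ t ∈ Set.Ioo t₁ t₂,
      deriv x t = u t - Real.sqrt (g / 2 * (h t + h₅) * h₅ / h t))
    (hchar : ∀ t ∈ Set.Ioo t₁ t₂,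
      x t - xhat = (u t - Real.sqrt (g * h t)) * (t - that))
    (hinv : ∀ t ∈ Set.Ioo t₁ t₂,
      u t + 2 * Real.sqrt (g * h t) = uA + 2 * Real.sqrt (g * hA)) :
    ∀ t ∈ Set.Ioo t₁ t₂,
      deriv h t = -(2 / (3 * (t - that)))
        * (h t - Real.sqrt ((h t + h₅) * h₅ / 2)) := by
  intro t ht
  obtain ⟨-, hu, hh⟩ := hdiff t ht
  have hJ : ∀ᶠ s in 𝓝 t, s ∈ Set.Ioo t₁ t₂ := isOpen_Ioo.mem_nhds ht
  have hc := (hh.hasDerivAt.const_mul g).sqrt (mul_pos hg (hpos t ht)).ne'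
  have hu' := hu.hasDerivAt.eq_neg_two_mul_of_add_two_mul_eventuallyEq_const hc
    (hJ.mono hinv)
  have hx := hu.hasDerivAt.of_eventuallyEq_sub_mul_sub hc (hJ.mono hchar)
  have hshock := hspeed t ht
  rw [hx.deriv, hu', sqrt_shock_speed_eq hg (hpos t ht)] at hshock
  refine depth_ode_of_sound_speed_ode hg (hpos t ht) (sub_ne_zero.mpr (ht₁.trans_lt ht.1).ne') ?_
  field_simp at hshock ⊢
  linear_combination -hshock

/-- ODE governing the depth ahead of a 1-shock penetrating a centered
1-rarefaction fan centered at `(x̂, t̂)`: if on an open interval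
`J = (t₁,t₂) ⊂ (t̂,∞)` the differentiable functions `x, u, h` (with `h > 0`)
satisfy the shock-speed relation `x' = u − √((g/2)(h+h₅)h₅/h)`, the fan
relation `x − x̂ = (u − √(gh))(t − t̂)`, and the invariant relation
`u + 2√(gh) = u_A + 2√(gh_A)`, then
`h' = −(2/(3(t−t̂)))·(h − √((h+h₅)h₅/2))` on `J`. -/
theorem stmt_17 (g h₅ uA hA xhat that t₁ t₂ : ℝ) (hg : 0 < g) (hh₅ : 0 < h₅)
    (hhA : 0 < hA) (ht₁ : that ≤ t₁)
    (x u h : ℝ → ℝ)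
    (hdiff : ∀ t ∈ Set.Ioo t₁ t₂, DifferentiableAt ℝ x t
      ∧ DifferentiableAt ℝ u t ∧ DifferentiableAt ℝ h t)
    (hpos : ∀ t ∈ Set.Ioo t₁ t₂, 0 < h t)
    (hspeed : ∀ t ∈ Set.Ioo t₁ t₂,
      deriv x t = u t - Real.sqrt (g / 2 * (h t + h₅) * h₅ / h t))
    (hchar : ∀ t ∈ Set.Ioo t₁ t₂,
      x t - xhat = (u t - Real.sqrt (g * h t)) * (t - that))
    (hinv : ∀ t ∈ Set.Ioo t₁ t₂,
      u t + 2 * Real.sqrt (g * h t) = uA + 2 * Real.sqrt (g * hA)) :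
    ∀ t ∈ Set.Ioo t₁ t₂,
      deriv h t = -(2 / (3 * (t - that)))
        * (h t - Real.sqrt ((h t + h₅) * h₅ / 2)) :=
  stmt_17_general g h₅ uA hA xhat that t₁ t₂ hg ht₁ x u h hdiff hpos hspeed hchar hinv
end

section
/- Let 0 < h_A < h₅. Then: (1) for every s ∈ [h_A, h₅), √(2 h₅ (s + h₅)) − 2s > 0, so the integrand below is well defined and positive; (2) the integral ∫_{h_A}^{h} 3 / (√(2 h₅ (s + h₅)) − 2s) ds tends to +∞ as h → h₅ from the left (equivalently, s ↦ 3/(√(2h₅(s+h₅)) − 2s) is not integrable on (h_A, h₅)). Consequently, in the relation ln((t − t̂)/(t₄ − t̂)) = ∫_{h_A}^{h} 3/(√(2h₅(s+h₅)) − 2s) ds governing the penetration of the 1-shock through the 1-rarefaction, the time t tends to +∞ as h → h₅, so the shock cannot finish penetrating the rarefaction in finite time when h₅ ≤ h₋. -/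
/-!
The denominator `d(s) = √(2h₅(s + h₅)) − 2s` vanishes at `s = h₅` and is positive before it.
By concavity of the square root it lies below its tangent line at `h₅`, which gives
`d(s) ≤ 3/2 · (h₅ − s)`, so the integrand dominates `2 / (h₅ − s)`, whose integral diverges
logarithmically. An integrable function would have a convergent primitive, and `t − t̂` is a
positive multiple of the exponential of the integral.
-/

open Real Filter MeasureTheory Set Topology

theorem tendsto_intervalIntegral_inv_sub_nhdsLT {a b : ℝ} (hab : a < b) :
    Tendsto (fun h => ∫ s in a..h, (b - s)⁻¹) (𝓝[<] b) atTop := by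
  have hgap : Tendsto (fun h => b - h) (𝓝[<] b) (𝓝[>] 0) := by
    refine tendsto_nhdsWithin_of_tendsto_nhds_of_eventually_within _ ?_ ?_
    · simpa using ((continuous_sub_left b).tendsto b).mono_left nhdsWithin_le_nhds
    · filter_upwards [self_mem_nhdsWithin] with h hh using sub_pos.2 (mem_Iio.1 hh)
  have hratio : Tendsto (fun h => (b - a) * (b - h)⁻¹) (𝓝[<] b) atTop :=
    (tendsto_inv_nhdsGT_zero.comp hgap).const_mul_atTop (sub_pos.2 hab)
  refine (tendsto_log_atTop.comp hratio).congr' ?_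
  filter_upwards [Ioo_mem_nhdsLT hab] with h hh
  have hzero : (0 : ℝ) ∉ uIcc (b - h) (b - a) := by
    rw [uIcc_of_le (by linarith [hh.1])]
    exact fun hz => (sub_pos.2 hh.2).not_ge hz.1
  rw [intervalIntegral.integral_comp_sub_left (fun x => x⁻¹), integral_inv hzero]
  rfl

theorem tendsto_intervalIntegral_nhdsLT_atTop_of_le {f : ℝ → ℝ} {a b c : ℝ} (hab : a < b)
    (hf : ContinuousOn f (Ico a b)) (hc : 0 < c) (hle : ∀ s ∈ Ico a b, c * (b - s)⁻¹ ≤ f s) :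
    Tendsto (fun h => ∫ s in a..h, f s) (𝓝[<] b) atTop := by
  refine tendsto_atTop_mono' _ ?_
    ((tendsto_intervalIntegral_inv_sub_nhdsLT hab).const_mul_atTop hc)
  filter_upwards [Ioo_mem_nhdsLT hab] with h hh
  have hsub : Icc a h ⊆ Ico a b := Icc_subset_Ico_right hh.2
  have hgap : ContinuousOn (fun s => (b - s)⁻¹) (Icc a h) :=
    (continuousOn_const.sub continuousOn_id).inv₀ fun s hs => (sub_pos.2 (hsub hs).2).ne'
  rw [← intervalIntegral.integral_const_mul]
  refine intervalIntegral.integral_mono_on hh.1.le ?_ ?_ fun s hs => hle s (hsub hs)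
  · exact ((continuousOn_const.mul hgap).mono (uIcc_of_le hh.1.le).subset).intervalIntegrable
  · exact ((hf.mono hsub).mono (uIcc_of_le hh.1.le).subset).intervalIntegrable

theorem not_integrableOn_Ioo_of_tendsto_intervalIntegral_atTop {f : ℝ → ℝ} {a b : ℝ}
    (hab : a < b) (hf : Tendsto (fun h => ∫ s in a..h, f s) (𝓝[<] b) atTop) :
    ¬ IntegrableOn f (Ioo a b) := by
  intro hint
  have hprim := intervalIntegral.continuousOn_primitive_interval (f := f) (μ := volume)
    (a := a) (b := b) (by rwa [uIcc_of_le hab.le, integrableOn_Icc_iff_integrableOn_Ioo])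
  have hlim : Tendsto (fun h => ∫ s in a..h, f s) (𝓝[<] b) (𝓝 (∫ s in a..b, f s)) :=
    (hprim b right_mem_uIcc).tendsto.mono_left <| nhdsWithin_le_of_mem <|
      mem_of_superset (Ioo_mem_nhdsLT hab)
        (Ioo_subset_Icc_self.trans (uIcc_of_le hab.le).symm.subset)
  exact not_tendsto_atTop_of_tendsto_nhds hlim hf

noncomputable def penetrationDenom (h₅ s : ℝ) : ℝ := √(2 * h₅ * (s + h₅)) - 2 * s

theorem penetrationDenom_pos {h₅ s : ℝ} (hh₅ : 0 < h₅) (hs : s < h₅) :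
    0 < penetrationDenom h₅ s := by
  rw [penetrationDenom, sub_pos]
  rcases lt_or_ge s 0 with hneg | hnonneg
  · linarith [sqrt_nonneg (2 * h₅ * (s + h₅))]
  · rw [lt_sqrt (by linarith)]
    nlinarith

theorem penetrationDenom_le {h₅ s : ℝ} (hs : -3 * h₅ ≤ s) :
    penetrationDenom h₅ s ≤ 3 / 2 * (h₅ - s) := by
  have htangent : √(2 * h₅ * (s + h₅)) ≤ (s + 3 * h₅) / 2 :=
    sqrt_le_iff.2 ⟨by linarith, by nlinarith [sq_nonneg (s - h₅)]⟩
  rw [penetrationDenom]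
  linarith

theorem continuousOn_three_div_penetrationDenom {h₅ : ℝ} (hh₅ : 0 < h₅) :
    ContinuousOn (fun s => 3 / penetrationDenom h₅ s) (Iio h₅) :=
  continuousOn_const.div (by unfold penetrationDenom; fun_prop)
    fun _ hs => (penetrationDenom_pos hh₅ hs).ne'

theorem two_mul_inv_sub_le_three_div_penetrationDenom {h₅ s : ℝ} (hh₅ : 0 < h₅)
    (hs : -3 * h₅ ≤ s) (hs' : s < h₅) :
    2 * (h₅ - s)⁻¹ ≤ 3 / penetrationDenom h₅ s :=
  calc 2 * (h₅ - s)⁻¹ = 3 / (3 / 2 * (h₅ - s)) := by field_simp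
    _ ≤ 3 / penetrationDenom h₅ s :=
      div_le_div_of_nonneg_left (by norm_num) (penetrationDenom_pos hh₅ hs')
        (penetrationDenom_le hs)

/-- For `0 < h_A < h₅`: (1) the integrand `3/(√(2h₅(s+h₅)) − 2s)` is well
defined and positive on `[h_A, h₅)`; (2) the integral
`∫_{h_A}^{h} 3/(√(2h₅(s+h₅)) − 2s) ds` tends to `+∞` as `h → h₅⁻`
(equivalently, the integrand is not integrable on `(h_A, h₅)`); consequently,
the penetration time `t = t̂ + (t₄ − t̂)·exp(∫_{h_A}^{h} …)` tends to `+∞` as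
`h → h₅⁻`, so the 1-shock cannot finish penetrating the 1-rarefaction in
finite time. -/
theorem stmt_18 (hA h₅ that t₄ : ℝ) (h1 : 0 < hA) (h2 : hA < h₅)
    (ht : that < t₄) :
    (∀ s ∈ Set.Ico hA h₅, 0 < Real.sqrt (2 * h₅ * (s + h₅)) - 2 * s)
    ∧ Filter.Tendsto
        (fun h : ℝ => ∫ s in hA..h, 3 / (Real.sqrt (2 * h₅ * (s + h₅)) - 2 * s))
        (nhdsWithin h₅ (Set.Iio h₅)) Filter.atTop
    ∧ ¬ MeasureTheory.IntegrableOn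
        (fun s : ℝ => 3 / (Real.sqrt (2 * h₅ * (s + h₅)) - 2 * s))
        (Set.Ioo hA h₅)
    ∧ Filter.Tendsto
        (fun h : ℝ => that + (t₄ - that)
          * Real.exp (∫ s in hA..h, 3 / (Real.sqrt (2 * h₅ * (s + h₅)) - 2 * s)))
        (nhdsWithin h₅ (Set.Iio h₅)) Filter.atTop := by
  have hh₅ : 0 < h₅ := h1.trans h2
  have hdiverge : Tendsto (fun h => ∫ s in hA..h, 3 / penetrationDenom h₅ s) (𝓝[<] h₅) atTop :=
    tendsto_intervalIntegral_nhdsLT_atTop_of_le h2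
      ((continuousOn_three_div_penetrationDenom hh₅).mono fun _ hs => hs.2) two_pos
      fun s hs => two_mul_inv_sub_le_three_div_penetrationDenom hh₅ (by linarith [hs.1]) hs.2
  refine ⟨fun s hs => penetrationDenom_pos hh₅ hs.2, hdiverge,
    not_integrableOn_Ioo_of_tendsto_intervalIntegral_atTop h2 hdiverge, ?_⟩
  exact tendsto_atTop_add_const_left _ _
    ((tendsto_exp_atTop.comp hdiverge).const_mul_atTop (sub_pos.2 ht))
end
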